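/- Let Z be a real skew-symmetric n×n matrix such that I − ZᵀZ is positive definite. Then (Z + √(I − ZᵀZ))ᵀ (Z + √(I − ZᵀZ)) = I, i.e., the matrix Z + √(I − ZᵀZ) is orthogonal. -/

import Mathlib

open Matrix

section

open scoped ComplexOrder

/-- The positive semidefinite square root of a positive semidefinite matrix (the definition of
`Matrix.PosSemidef.sqrt` in the older Mathlib, which has since been removed). -/
noncomputable def Matrix.PosSemidef.sqrt {n 𝕜 : Type*} [Fintype n] [RCLike 𝕜] [DecidableEq n]
    {A : Matrix n n 𝕜} (hA : A.PosSemidef) : Matrix n n 𝕜 :=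
  hA.1.eigenvectorUnitary.1 * diagonal ((↑) ∘ (√·) ∘ hA.1.eigenvalues) *
  (star hA.1.eigenvectorUnitary : Matrix n n 𝕜)

end

/-!
Put `S = √(1 - ZᵀZ)`. Since `Zᵀ = -Z`, the matrix `1 - ZᵀZ = 1 + Z²` commutes with `Z`, and so
does `S`, being a function of it in the continuous functional calculus. Hence
`(Z + S)ᵀ(Z + S) = (S - Z)(S + Z) = S² - Z² = 1`.
-/

namespace Matrix.PosSemidef

open scoped ComplexOrder

variable {n 𝕜 : Type*} [Fintype n] [RCLike 𝕜] [DecidableEq n] {A : Matrix n n 𝕜}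

theorem sqrt_eq_cfc (hA : A.PosSemidef) : hA.sqrt = cfc Real.sqrt A := by
  rw [hA.1.cfc_eq, IsHermitian.cfc, Unitary.conjStarAlgAut_apply]
  rfl

theorem isHermitian_sqrt (hA : A.PosSemidef) : hA.sqrt.IsHermitian := by
  rw [hA.sqrt_eq_cfc]
  exact cfc_predicate _ _

theorem sqrt_mul_sqrt (hA : A.PosSemidef) : hA.sqrt * hA.sqrt = A := by
  have hspec : ∀ x ∈ spectrum ℝ A, √x * √x = x := by
    rw [hA.1.spectrum_real_eq_range_eigenvalues]
    rintro - ⟨i, rfl⟩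
    exact Real.mul_self_sqrt (hA.eigenvalues_nonneg i)
  rw [hA.sqrt_eq_cfc, ← cfc_mul .., cfc_congr hspec]
  exact cfc_id' ℝ A hA.1

theorem commute_sqrt_left (hA : A.PosSemidef) {B : Matrix n n 𝕜} (h : Commute A B) :
    Commute hA.sqrt B := by
  rw [hA.sqrt_eq_cfc]
  exact h.cfc_real _

end Matrix.PosSemidef

theorem star_add_mul_add_eq_one {R : Type*} [Ring R] [StarRing R] {Z S : R}
    (hZ : star Z = -Z) (hS : star S = S) (hSS : S * S = 1 - star Z * Z) (hc : Commute Z S) :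
    star (Z + S) * (Z + S) = 1 := by
  rw [star_add, hZ, hS, add_mul, mul_add, mul_add, hSS, hZ, ← hc.eq]
  noncomm_ring

/-- Let `Z` be a real skew-symmetric `n × n` matrix such that
`I - Zᵀ Z` is positive definite.  Then `(Z + √(I - Zᵀ Z))ᵀ (Z + √(I - Zᵀ Z)) = I`,
i.e. the matrix `Z + √(I - Zᵀ Z)` is orthogonal (here the square root is the unique
positive (semi)definite square root). -/
theorem stmt1 {n : ℕ} (Z : Matrix (Fin n) (Fin n) ℝ)
    (hZ : Zᵀ = -Z) (hpd : (1 - Zᵀ * Z).PosDef) :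
    (Z + hpd.posSemidef.sqrt)ᵀ * (Z + hpd.posSemidef.sqrt) = 1 := by
  have hcomm : Commute (1 - Zᵀ * Z) Z := by
    rw [hZ]
    exact (Commute.one_left Z).sub_left ((Commute.refl Z).neg_left.mul_left (Commute.refl Z))
  exact star_add_mul_add_eq_one hZ hpd.posSemidef.isHermitian_sqrt hpd.posSemidef.sqrt_mul_sqrt
    (hpd.posSemidef.commute_sqrt_left hcomm).symm
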